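/- arXiv:2212.12265 — 4 statements merged into one kernel-verified Lean document; each statement's English description precedes it below -/
import Mathlib

section
/- Let C1 and C2 be convolutional codes in F[x]^n, let j ∈ ℕ, and let φ : C1 → C2 be a j-equivalence. Then: (1) φ is a j'-equivalence for every natural number j' with 0 ≤ j' ≤ j; and (2) wt(c_{[h,i]}) = wt(φ(c)_{[h,i]}) for all c ∈ C1 and all 0 ≤ h ≤ i ≤ j; in particular wt(c_{[i,i]}) = wt(φ(c)_{[i,i]}) for 0 ≤ i ≤ j. -/
open Polynomial

namespace ConvCode

variable {F : Type*} [Field F] [Fintype F] {n k : ℕ}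

/-- Weight of a polynomial vector: total number of nonzero coefficients. -/
noncomputable def wtv (c : Fin n → Polynomial F) : ℕ := ∑ ℓ, (c ℓ).support.card

/-- Truncation of a polynomial, keeping the coefficients of degrees `h` through `j`. -/
noncomputable def truncp (h j : ℕ) (p : Polynomial F) : Polynomial F :=
  ∑ i ∈ Finset.Icc h j, Polynomial.C (p.coeff i) * Polynomial.X ^ i

/-- Truncation `c_{[h,j]}` of a polynomial vector. -/
noncomputable def truncv (h j : ℕ) (c : Fin n → Polynomial F) : Fin n → Polynomial F :=
  fun ℓ => truncp h j (c ℓ)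

/-- Degree of a polynomial vector: the largest `i` such that `c[i] ≠ 0`. -/
def degv (c : Fin n → Polynomial F) : ℕ := Finset.univ.sup fun ℓ => (c ℓ).natDegree

/-- `φ` is a `j`-equivalence: it preserves weights of `j`-th truncations. -/
def IsJEquiv (C1 C2 : Submodule (Polynomial F) (Fin n → Polynomial F))
    (φ : C1 ≃ₗ[Polynomial F] C2) (j : ℕ) : Prop :=
  ∀ c : C1, wtv (truncv 0 j (c : Fin n → Polynomial F)) =
    wtv (truncv 0 j ((φ c : C2) : Fin n → Polynomial F))

/-- `φ` is an equivalence: it is a `j`-equivalence for every `j`. -/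
def IsEquiv (C1 C2 : Submodule (Polynomial F) (Fin n → Polynomial F))
    (φ : C1 ≃ₗ[Polynomial F] C2) : Prop := ∀ j : ℕ, IsJEquiv C1 C2 φ j

/-- `φ` is an isometry: it preserves weights. -/
def IsIsometry (C1 C2 : Submodule (Polynomial F) (Fin n → Polynomial F))
    (φ : C1 ≃ₗ[Polynomial F] C2) : Prop :=
  ∀ c : C1, wtv (c : Fin n → Polynomial F) = wtv ((φ c : C2) : Fin n → Polynomial F)

/-- `G` is a generator matrix of `C`: its rows form an `F[x]`-basis of `C`. -/
def IsGenMat (C : Submodule (Polynomial F) (Fin n → Polynomial F))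
    (G : Matrix (Fin k) (Fin n) (Polynomial F)) : Prop :=
  LinearIndependent (Polynomial F) (fun i => G i) ∧
    Submodule.span (Polynomial F) (Set.range fun i => G i) = C

/-- `G` is row reduced: its leading row coefficient matrix has full rank. -/
def RowReduced (G : Matrix (Fin k) (Fin n) (Polynomial F)) : Prop :=
  LinearIndependent F (fun i => fun ℓ => (G i ℓ).coeff (degv (G i)))

/-- `C` is noncatastrophic: it has a generator matrix with a polynomial right inverse
whose constant term has rank `k`. -/
def Noncatastrophic (C : Submodule (Polynomial F) (Fin n → Polynomial F)) (k : ℕ) : Prop :=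
  ∃ G : Matrix (Fin k) (Fin n) (Polynomial F), IsGenMat C G ∧
    (∃ H : Matrix (Fin n) (Fin k) (Polynomial F), G * H = 1) ∧
    LinearIndependent F (fun i => fun ℓ => (G i ℓ).eval 0)

/-- Joint support of a family of polynomial vectors: the pairs `(ℓ, i)` such that the
coefficient of `x^i` in the `ℓ`-th coordinate of some member is nonzero. -/
def gsupp {r : ℕ} (d : Fin r → Fin n → Polynomial F) : Set (Fin n × ℕ) :=
  { q | ∃ s, ((d s) q.1).coeff q.2 ≠ 0 }

/-- The `(r,j)`-generalized column distance of the code generated by `G`. -/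
noncomputable def gcdJ (G : Matrix (Fin k) (Fin n) (Polynomial F)) (r j : ℕ) : ℕ :=
  sInf { m | ∃ p : Fin r → Fin k → Polynomial F,
    LinearIndependent F (fun s => fun l => (p s l).eval 0) ∧
    m = (gsupp fun s => truncv 0 j (Matrix.vecMul (p s) G)).ncard }

/-- The `r`-generalized column distance: the limit as `j → ∞` of the `(r,j)`-generalized
column distances. -/
noncomputable def gcdLim (G : Matrix (Fin k) (Fin n) (Polynomial F)) (r : ℕ) : ℕ :=
  Filter.limsup (fun j => gcdJ G r j) Filter.atTop

/-- Evaluation at `0`, as an `F`-linear map `F[x]^n → F^n`. -/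
noncomputable def ev0 : (Fin n → Polynomial F) →ₗ[F] (Fin n → F) :=
  LinearMap.pi fun ℓ => (Polynomial.aeval (0 : F)).toLinearMap.comp (LinearMap.proj ℓ)

/-- `C[0] = {c(0) : c ∈ C} ⊆ F^n`. -/
noncomputable def evalZero (C : Submodule (Polynomial F) (Fin n → Polynomial F)) :
    Submodule F (Fin n → F) := (C.restrictScalars F).map ev0

/-- The `r`-th generalized Hamming weight of a block code `L ⊆ F^n`. -/
noncomputable def hammingGW (L : Submodule F (Fin n → F)) (r : ℕ) : ℕ :=
  sInf { m | ∃ V : Submodule F (Fin n → F), V ≤ L ∧ Module.finrank F V = r ∧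
    m = { ℓ : Fin n | ∃ v ∈ V, v ℓ ≠ 0 }.ncard }

/-- The `r`-th generalized weight of a convolutional code. -/
noncomputable def genWt (C : Submodule (Polynomial F) (Fin n → Polynomial F)) (r : ℕ) : ℕ :=
  sInf { m | ∃ d : Fin r → Fin n → Polynomial F, (∀ s, d s ∈ C) ∧
    (r : Cardinal) ≤ Module.rank (Polynomial F)
      ↥(Submodule.span (Polynomial F) (Set.range d)) ∧
    m = (gsupp d).ncard }

/-- The free distance of a convolutional code. -/
noncomputable def dfree (C : Submodule (Polynomial F) (Fin n → Polynomial F)) : ℕ :=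
  sInf { m | ∃ c : Fin n → Polynomial F, c ∈ C ∧ c ≠ 0 ∧ m = wtv c }

end ConvCode

open ConvCode

/-! Multiplying a codeword by `x ^ m` moves its coefficients of degree `≤ j'` to degrees `m, …, j' + m`
and creates nothing below `m`; since `φ` is `F[x]`-linear, a `j`-equivalence is therefore a
`j'`-equivalence for every `j' ≤ j`. The weight of the window `[h + 1, i]` is the weight of `[0, i]`
minus that of `[0, h]`. -/

theorem Polynomial.support_X_pow_mul {R : Type*} [Semiring R] (m : ℕ) (p : R[X]) :
    (X ^ m * p).support = p.support.map (addRightEmbedding m) := by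
  ext k
  simp only [mem_support_iff, coeff_X_pow_mul', Finset.mem_map, addRightEmbedding_apply]
  constructor
  · intro hk
    split_ifs at hk with hmk
    · exact ⟨k - m, hk, Nat.sub_add_cancel hmk⟩
    · exact absurd rfl hk
  · rintro ⟨a, ha, rfl⟩
    simpa using ha

namespace ConvCode

open Finset

variable {F : Type*} [Field F] {n : ℕ}

theorem support_truncp (h j : ℕ) (p : F[X]) :
    (truncp h j p).support = p.support ∩ Icc h j := by
  ext m
  simp only [truncp, finsetSum_coeff, coeff_C_mul, coeff_X_pow, mul_ite, mul_one, mul_zero,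
    sum_ite_eq, mem_support_iff, mem_inter]
  split_ifs <;> tauto

theorem wtv_truncv (h j : ℕ) (c : Fin n → F[X]) :
    wtv (truncv h j c) = ∑ ℓ, #((c ℓ).support ∩ Icc h j) := by
  simp only [wtv, truncv, support_truncp]

theorem wtv_truncv_zero_X_pow_smul (j m : ℕ) (c : Fin n → F[X]) :
    wtv (truncv 0 (j + m) ((X ^ m : F[X]) • c)) = wtv (truncv 0 j c) := by
  simp only [wtv_truncv, Pi.smul_apply, smul_eq_mul, Polynomial.support_X_pow_mul,
    ← filter_mem_eq_inter, filter_map, card_map]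
  congr! 3 with ℓ _ i
  simp

theorem wtv_truncv_split {a b d : ℕ} (hab : a ≤ b + 1) (hbd : b ≤ d) (c : Fin n → F[X]) :
    wtv (truncv a d c) = wtv (truncv a b c) + wtv (truncv (b + 1) d c) := by
  have hIcc : Icc a d = Icc a b ∪ Icc (b + 1) d := by
    ext i
    simp only [mem_union, mem_Icc]
    omega
  have hdisj : Disjoint (Icc a b) (Icc (b + 1) d) :=
    disjoint_left.mpr fun i hi hi' => by simp only [mem_Icc] at hi hi'; omega
  simp only [wtv_truncv, ← sum_add_distrib, hIcc, inter_union_distrib_left]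
  exact sum_congr rfl fun ℓ _ =>
    card_union_of_disjoint (hdisj.mono inf_le_right inf_le_right)

theorem IsJEquiv.mono {C1 C2 : Submodule F[X] (Fin n → F[X])} {φ : C1 ≃ₗ[F[X]] C2} {j j' : ℕ}
    (hφ : IsJEquiv C1 C2 φ j) (hj' : j' ≤ j) : IsJEquiv C1 C2 φ j' := by
  intro c
  obtain ⟨m, rfl⟩ := Nat.exists_eq_add_of_le hj'
  simpa only [map_smul, Submodule.coe_smul, wtv_truncv_zero_X_pow_smul] using
    hφ ((X ^ m : F[X]) • c)

end ConvCode

theorem jEquiv_props_general {F : Type*} [Field F] {n : ℕ}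
    (C1 C2 : Submodule (Polynomial F) (Fin n → Polynomial F))
    (j : ℕ) (φ : C1 ≃ₗ[Polynomial F] C2) (hφ : IsJEquiv C1 C2 φ j) :
    (∀ j' : ℕ, j' ≤ j → IsJEquiv C1 C2 φ j') ∧
    (∀ c : C1, ∀ h i : ℕ, h ≤ i → i ≤ j →
      wtv (truncv h i (c : Fin n → Polynomial F)) =
        wtv (truncv h i ((φ c : C2) : Fin n → Polynomial F))) := by
  refine ⟨fun j' hj' => hφ.mono hj', fun c h i hhi hij => ?_⟩
  cases h with
  | zero => exact hφ.mono hij c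
  | succ h =>
    have hsplit (x : Fin n → F[X]) := wtv_truncv_split (Nat.zero_le _) (by omega : h ≤ i) x
    have hi := hφ.mono hij c
    rw [hsplit, hsplit, hφ.mono (by omega : h ≤ j) c] at hi
    exact Nat.add_left_cancel hi

/-- basic properties of a `j`-equivalence: it is a `j'`-equivalence for all
`j' ≤ j`, and it preserves weights of all truncations `c_{[h,i]}` with `0 ≤ h ≤ i ≤ j`. -/
theorem jEquiv_props {F : Type*} [Field F] [Fintype F] {n : ℕ}
    (C1 C2 : Submodule (Polynomial F) (Fin n → Polynomial F))
    (j : ℕ) (φ : C1 ≃ₗ[Polynomial F] C2) (hφ : IsJEquiv C1 C2 φ j) :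
    (∀ j' : ℕ, j' ≤ j → IsJEquiv C1 C2 φ j') ∧
    (∀ c : C1, ∀ h i : ℕ, h ≤ i → i ≤ j →
      wtv (truncv h i (c : Fin n → Polynomial F)) =
        wtv (truncv h i ((φ c : C2) : Fin n → Polynomial F))) :=
  jEquiv_props_general C1 C2 j φ hφ
end

section
/- Every equivalence φ : C1 → C2 between convolutional codes is a strong isometry, i.e., wt(c) = wt(φ(c)) and deg(c) = deg(φ(c)) for all c ∈ C1. -/
open Polynomial

namespace ConvCode

variable {F : Type*} [Field F] {n : ℕ}

theorem support_truncp_zero (j : ℕ) (p : F[X]) :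
    (truncp 0 j p).support = p.support.filter (· ≤ j) := by
  ext m
  simp only [truncp, mem_support_iff, Finset.mem_filter, finsetSum_coeff, coeff_C_mul,
    coeff_X_pow, mul_ite, mul_one, mul_zero, Finset.sum_ite_eq, Finset.mem_Icc, zero_le,
    true_and]
  split_ifs <;> tauto

theorem natDegree_le_iff_forall_mem_support_le {p : F[X]} {j : ℕ} :
    p.natDegree ≤ j ↔ ∀ m ∈ p.support, m ≤ j := by
  refine ⟨fun h m hm => (le_natDegree_of_mem_supp m hm).trans h, fun h => ?_⟩
  refine natDegree_le_iff_coeff_eq_zero.2 fun N hN => ?_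
  by_contra hN0
  exact absurd (h N (mem_support_iff.2 hN0)) (not_le.2 hN)

theorem wtv_truncv_eq_iff (j : ℕ) (c : Fin n → F[X]) :
    wtv (truncv 0 j c) = wtv c ↔ degv c ≤ j := by
  have hle : ∀ ℓ ∈ Finset.univ, (truncp 0 j (c ℓ)).support.card ≤ (c ℓ).support.card :=
    fun ℓ _ => support_truncp_zero j (c ℓ) ▸ Finset.card_filter_le _ _
  unfold wtv truncv degv
  rw [Finset.sum_eq_sum_iff_of_le hle, Finset.sup_le_iff]
  simp only [natDegree_le_iff_forall_mem_support_le, support_truncp_zero,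
    Finset.card_filter_eq_iff]

variable {C1 C2 : Submodule F[X] (Fin n → F[X])} {φ : C1 ≃ₗ[F[X]] C2}

theorem IsEquiv.isIsometry (hφ : IsEquiv C1 C2 φ) : IsIsometry C1 C2 φ := by
  intro c
  have hc := (wtv_truncv_eq_iff _ _).2 (le_max_left (degv (c : Fin n → F[X])) (degv (φ c).1))
  have hφc := (wtv_truncv_eq_iff _ _).2 (le_max_right (degv (c : Fin n → F[X])) (degv (φ c).1))
  rw [← hc, ← hφc]
  exact hφ _ c

/-- `deg c` is the least `j` at which truncation keeps the whole weight, and an equivalence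
preserves both sides of that comparison. -/
theorem IsEquiv.degv_eq (hφ : IsEquiv C1 C2 φ) (c : C1) :
    degv (c : Fin n → F[X]) = degv (φ c : Fin n → F[X]) := by
  refine eq_of_forall_ge_iff fun j => ?_
  rw [← wtv_truncv_eq_iff, ← wtv_truncv_eq_iff, hφ j c, hφ.isIsometry c]

end ConvCode

open ConvCode

theorem equiv_is_strong_isometry_general {F : Type*} [Field F] {n : ℕ}
    (C1 C2 : Submodule (Polynomial F) (Fin n → Polynomial F))
    (φ : C1 ≃ₗ[Polynomial F] C2) (hφ : IsEquiv C1 C2 φ) :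
    (∀ c : C1, wtv (c : Fin n → Polynomial F) =
        wtv ((φ c : C2) : Fin n → Polynomial F)) ∧
    (∀ c : C1, degv (c : Fin n → Polynomial F) =
        degv ((φ c : C2) : Fin n → Polynomial F)) :=
  ⟨hφ.isIsometry, hφ.degv_eq⟩

/-- every equivalence of convolutional codes is a strong isometry. -/
theorem equiv_is_strong_isometry {F : Type*} [Field F] [Fintype F] {n : ℕ}
    (C1 C2 : Submodule (Polynomial F) (Fin n → Polynomial F))
    (φ : C1 ≃ₗ[Polynomial F] C2) (hφ : IsEquiv C1 C2 φ) :
    (∀ c : C1, wtv (c : Fin n → Polynomial F) =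
        wtv ((φ c : C2) : Fin n → Polynomial F)) ∧
    (∀ c : C1, degv (c : Fin n → Polynomial F) =
        degv ((φ c : C2) : Fin n → Polynomial F)) :=
  equiv_is_strong_isometry_general C1 C2 φ hφ
end

section
/- Let φ : C1 → C2 be an equivalence of convolutional codes in F[x]^n. Then there exist an n×n permutation matrix P over F and a diagonal matrix D = diag(a_1,…,a_n) with a_1,…,a_n ∈ F\{0} such that φ(c) = cPD for all c ∈ C1. In particular, every equivalence extends to an isometry of F[x]^n. -/
open Polynomial

/-!
Reading off the coefficient of `x^i` in each coordinate turns `c ↦ c` and `c ↦ φ c` into two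
families of `F`-linear functionals `c ↦ c_ℓ[i]` and `c ↦ φ(c)_ℓ[i]` on `C1`; differencing the
truncated weights shows that, for each fixed `i`, the two families have the same Hamming weight
at every `c`. By a MacWilliams-type extension argument (the additive characters `w ↦ χ (λ w)`
are linearly independent, and their sums over `Fˣ`-multiples depend only on the weight) two such
families differ by a permutation and nonzero scalars. Multiplying by `x^(j-i)` carries this
relation from degree `j` down to every degree `i ≤ j`, and since there are only finitely many
permutations and scalings, a single one works in every degree.
-/

open Finset

theorem exists_perm_comp_eq_of_card_fiber_eq {α β : Type*} [Fintype α] [DecidableEq β]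
    (f g : α → β) (h : ∀ b, #{a | f a = b} = #{a | g a = b}) :
    ∃ σ : Equiv.Perm α, ∀ a, g (σ a) = f a :=
  ⟨Equiv.ofFiberEquiv fun b =>
      Fintype.equivOfCardEq (by simpa only [Fintype.card_subtype] using h b),
    Equiv.ofFiberEquiv_map _⟩

theorem exists_forall_of_antitone {α : Type*} [Finite α] (P : α → ℕ → Prop)
    (hP : ∀ a i j, i ≤ j → P a j → P a i) (h : ∀ j, ∃ a, P a j) : ∃ a, ∀ j, P a j := by
  by_contra! hne
  choose J hJ using hne
  have := Fintype.ofFinite α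
  obtain ⟨a, ha⟩ := h (univ.sup J)
  exact hJ a (hP a _ _ (le_sup (mem_univ a)) ha)

theorem eq_of_sum_range_succ_eq {M : Type*} [AddCancelCommMonoid M] {a b : ℕ → M}
    (h : ∀ j, ∑ i ∈ range (j + 1), a i = ∑ i ∈ range (j + 1), b i) : a = b := by
  funext i
  cases i with
  | zero => simpa using h 0
  | succ k =>
    have := h (k + 1)
    rwa [sum_range_succ, sum_range_succ _ (k + 1), h k, add_right_inj] at this

theorem sum_comp_eq_of_card_ne_zero_eq {ι M₀ M : Type*} [Fintype ι] [Zero M₀] [DecidableEq M₀]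
    [AddCommMonoid M] {x y : ι → M₀} (hxy : #{i | x i ≠ 0} = #{i | y i ≠ 0})
    (g : M₀ → M) {c : M} (hg : ∀ a ≠ 0, g a = c) :
    ∑ i, g (x i) = ∑ i, g (y i) := by
  have split : ∀ z : ι → M₀, ∑ i, g (z i) = #{i | z i = 0} • g 0 + #{i | z i ≠ 0} • c := by
    intro z
    rw [← sum_filter_add_sum_filter_not univ fun i => z i = 0]
    congr 1
    · rw [← sum_const]
      exact sum_congr rfl fun i hi => by rw [(mem_filter.1 hi).2]
    · rw [← sum_const]
      exact sum_congr rfl fun i hi => hg _ (mem_filter.1 hi).2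
  have hzero : #{i | x i = 0} = #{i | y i = 0} := by
    have hx := card_filter_add_card_filter_not (s := univ) (p := fun i => x i = 0)
    have hy := card_filter_add_card_filter_not (s := univ) (p := fun i => y i = 0)
    simp only [ne_eq] at hxy
    omega
  rw [split, split, hxy, hzero]

theorem LinearIndependent.card_fiber_eq_of_sum_eq {R M α β : Type*} [Semiring R] [CharZero R]
    [AddCommMonoid M] [Module R M] {v : β → M} (hv : LinearIndependent R v) [Fintype α]
    [DecidableEq β] {x y : α → β} (h : ∑ a, v (x a) = ∑ a, v (y a)) (b : β) :
    #{a | x a = b} = #{a | y a = b} := by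
  have hsingle := hv (a₁ := ∑ a, Finsupp.single (x a) 1) (a₂ := ∑ a, Finsupp.single (y a) 1)
    (by simpa only [map_sum, Finsupp.linearCombination_single, one_smul] using h)
  have := congrArg (· b) hsingle
  simpa only [Finsupp.finsetSum_apply, Finsupp.single_apply, sum_boole, Nat.cast_inj] using this

theorem MulAction.card_smul_eq_of_mem_orbit {G X : Type*} [Group G] [Fintype G] [MulAction G X]
    [DecidableEq X] {x y : X} (hx : x ∈ orbit G y) :
    #{g : G | g • x = y} = #{g : G | g • y = y} := by
  obtain ⟨g₀, rfl⟩ := hx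
  exact card_equiv (Equiv.mulRight g₀) (by simp [mul_smul])

theorem MulAction.card_smul_eq_zero_of_notMem_orbit {G X : Type*} [Group G] [Fintype G]
    [MulAction G X] [DecidableEq X] {x y : X} (hx : x ∉ orbit G y) :
    #{g : G | g • x = y} = 0 := by
  rw [card_eq_zero, filter_eq_empty_iff]
  rintro g - rfl
  exact hx ⟨g⁻¹, inv_smul_smul g x⟩

open scoped Classical in
theorem MulAction.card_prod_smul_eq {ι G X : Type*} [Fintype ι] [Group G] [Fintype G]
    [MulAction G X] (D : ι → X) (y : X) :
    #{p : ι × G | p.2 • D p.1 = y} = #{i | D i ∈ orbit G y} * #{g : G | g • y = y} := by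
  rw [card_filter, Fintype.sum_prod_type, card_filter, sum_mul]
  refine sum_congr rfl fun i _ => ?_
  rw [← card_filter]
  split_ifs with hi
  · rw [one_mul, card_smul_eq_of_mem_orbit hi]
  · rw [zero_mul, card_smul_eq_zero_of_notMem_orbit hi]

theorem AddChar.IsPrimitive.comp_linearMap_injective {F W L : Type*} [Field F] [AddCommMonoid W]
    [Module F W] [CommRing L] {χ : AddChar F L} (hχ : χ.IsPrimitive) :
    Function.Injective fun (φ : W →ₗ[F] F) (w : W) => χ (φ w) := by
  intro φ ψ h
  ext w
  refine AddChar.to_mulShift_inj_of_isPrimitive hχ (DFunLike.ext _ _ fun a => ?_)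
  simpa only [AddChar.mulShift_apply, mul_comm _ a, ← smul_eq_mul, ← map_smul]
    using congrFun h (a • w)

theorem AddChar.IsPrimitive.linearIndependent_comp_linearMap {F W L : Type*} [Field F]
    [AddCommMonoid W] [Module F W] [CommRing L] [IsDomain L] {χ : AddChar F L}
    (hχ : χ.IsPrimitive) :
    LinearIndependent L fun (φ : W →ₗ[F] F) (w : W) => χ (φ w) :=
  (linearIndependent_monoidHom (Multiplicative W) L).comp
    (fun φ : W →ₗ[F] F => (χ.compAddMonoidHom φ.toAddMonoidHom).toMonoidHom)
    fun _ _ h => hχ.comp_linearMap_injective (congrArg (fun f : Multiplicative W →* L => ⇑f) h)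

theorem sum_units_mul_eq_of_ne_zero {F M : Type*} [Field F] [Fintype F] [DecidableEq F]
    [AddCommMonoid M] (f : F → M) {a : F} (ha : a ≠ 0) : ∑ u : Fˣ, f (u * a) = ∑ u : Fˣ, f u :=
  Fintype.sum_equiv (Equiv.mulRight (Units.mk0 a ha)) _ _ fun _ => rfl

theorem exists_perm_units_smul_of_card_ne_zero_eq {F W ι : Type*} [Field F] [Fintype F]
    [DecidableEq F] [AddCommMonoid W] [Module F W] [Fintype ι] (E G : ι → W →ₗ[F] F)
    (h : ∀ w, #{i | E i w ≠ 0} = #{i | G i w ≠ 0}) :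
    ∃ σ : Equiv.Perm ι, ∃ u : ι → Fˣ, ∀ i, G i = u i • E (σ i) := by
  classical
  let χ := AddChar.FiniteField.primitiveChar_to_Complex F
  have hχ : χ.IsPrimitive := AddChar.FiniteField.primitiveChar_to_Complex_isPrimitive F
  have hsum : ∑ p : ι × Fˣ, (fun w => χ ((p.2 • E p.1) w))
      = ∑ p : ι × Fˣ, (fun w => χ ((p.2 • G p.1) w)) := by
    funext w
    -- `∑ u : Fˣ, χ (u * x)` only depends on whether `x = 0`.
    simp only [Finset.sum_apply, Fintype.sum_prod_type, LinearMap.smul_apply, Units.smul_def,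
      smul_eq_mul]
    exact sum_comp_eq_of_card_ne_zero_eq (h w) (fun x => ∑ u : Fˣ, χ (u * x))
      fun _ ha => sum_units_mul_eq_of_ne_zero (fun x => χ x) ha
  have hfiber (μ : W →ₗ[F] F) :
      #{i | G i ∈ MulAction.orbit Fˣ μ} = #{i | E i ∈ MulAction.orbit Fˣ μ} := by
    have := hχ.linearIndependent_comp_linearMap.card_fiber_eq_of_sum_eq hsum μ
    rw [MulAction.card_prod_smul_eq, MulAction.card_prod_smul_eq] at this
    exact (Nat.eq_of_mul_eq_mul_right (card_pos.2 ⟨1, by simp⟩) this).symm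
  obtain ⟨σ, hσ⟩ := exists_perm_comp_eq_of_card_fiber_eq
    (fun i => (⟦G i⟧ : MulAction.orbitRel.Quotient Fˣ (W →ₗ[F] F)))
    (fun i => ⟦E i⟧) fun b => by
      induction b using Quotient.ind with
      | _ μ =>
        simp only [Quotient.eq, MulAction.orbitRel_apply]
        exact hfiber μ
  choose u hu using fun i => MulAction.orbitRel_apply.1 (Quotient.exact (hσ i).symm)
  exact ⟨σ, u, fun i => (hu i).symm⟩

namespace ConvCode

variable {F : Type*} [Field F]

noncomputable def coordCoeff {ι M : Type*} [AddCommMonoid M] [Module F[X] M] [Module F M]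
    [IsScalarTower F F[X] M] (f : M →ₗ[F[X]] ι → F[X]) (ℓ : ι) (i : ℕ) : M →ₗ[F] F :=
  lcoeff F i ∘ₗ LinearMap.proj ℓ ∘ₗ f.restrictScalars F

section coordCoeff

variable {ι M : Type*} [AddCommMonoid M] [Module F[X] M] [Module F M] [IsScalarTower F F[X] M]

@[simp]
theorem coordCoeff_apply (f : M →ₗ[F[X]] ι → F[X]) (ℓ : ι) (i : ℕ) (c : M) :
    coordCoeff f ℓ i c = (f c ℓ).coeff i :=
  rfl

theorem coordCoeff_X_pow_smul (f : M →ₗ[F[X]] ι → F[X]) (ℓ : ι) (i m : ℕ) (c : M) :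
    coordCoeff f ℓ (i + m) ((X ^ m : F[X]) • c) = coordCoeff f ℓ i c := by
  simp

theorem coordCoeff_eq_smul_of_le {f g : M →ₗ[F[X]] ι → F[X]} {ℓ ℓ' : ι} {u : Fˣ} {i j : ℕ}
    (hij : i ≤ j) (h : coordCoeff g ℓ j = u • coordCoeff f ℓ' j) :
    coordCoeff g ℓ i = u • coordCoeff f ℓ' i := by
  obtain ⟨m, rfl⟩ := Nat.exists_eq_add_of_le hij
  ext c
  rw [← coordCoeff_X_pow_smul g ℓ i m, h, LinearMap.smul_apply, LinearMap.smul_apply,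
    coordCoeff_X_pow_smul]

theorem exists_perm_units_smul_coordCoeff [Fintype F] [DecidableEq F] [Fintype ι]
    (f g : M →ₗ[F[X]] ι → F[X])
    (h : ∀ i c, #{ℓ | coordCoeff f ℓ i c ≠ 0} = #{ℓ | coordCoeff g ℓ i c ≠ 0}) :
    ∃ σ : Equiv.Perm ι, ∃ u : ι → Fˣ, ∀ ℓ i, coordCoeff g ℓ i = u ℓ • coordCoeff f (σ ℓ) i := by
  have hlevel (j : ℕ) : ∃ p : Equiv.Perm ι × (ι → Fˣ),
      ∀ ℓ, ∀ i ≤ j, coordCoeff g ℓ i = p.2 ℓ • coordCoeff f (p.1 ℓ) i := by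
    obtain ⟨σ, u, hj⟩ :=
      exists_perm_units_smul_of_card_ne_zero_eq (coordCoeff f · j) (coordCoeff g · j) (h j)
    exact ⟨(σ, u), fun ℓ i hij => coordCoeff_eq_smul_of_le hij (hj ℓ)⟩
  obtain ⟨⟨σ, u⟩, hσu⟩ := exists_forall_of_antitone _
    (fun _ _ _ hij hj ℓ k hk => hj ℓ k (hk.trans hij)) hlevel
  exact ⟨σ, u, fun ℓ i => hσu i ℓ i le_rfl⟩

end coordCoeff

theorem coeff_truncp_zero (j m : ℕ) (p : F[X]) :
    (truncp 0 j p).coeff m = if m ≤ j then p.coeff m else 0 := by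
  simp [truncp]

theorem wtv_truncv_zero [DecidableEq F] {n : ℕ} (j : ℕ) (c : Fin n → F[X]) :
    wtv (truncv 0 j c) = ∑ i ∈ range (j + 1), #{ℓ | (c ℓ).coeff i ≠ 0} := by
  have hsupp (p : F[X]) : (truncp 0 j p).support = {i ∈ range (j + 1) | p.coeff i ≠ 0} := by
    ext i
    simp [coeff_truncp_zero]
  simp only [wtv, truncv, hsupp, card_filter]
  exact sum_comm

theorem IsEquiv.card_coeff_ne_zero_eq [DecidableEq F] {n : ℕ}
    {C1 C2 : Submodule F[X] (Fin n → F[X])} {φ : C1 ≃ₗ[F[X]] C2} (hφ : IsEquiv C1 C2 φ)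
    (i : ℕ) (c : C1) :
    #{ℓ | (c.1 ℓ).coeff i ≠ 0} = #{ℓ | ((φ c).1 ℓ).coeff i ≠ 0} := by
  have := eq_of_sum_range_succ_eq fun j => by
    simpa only [wtv_truncv_zero] using hφ j c
  exact congrFun this i

end ConvCode

open ConvCode
/-- every equivalence of convolutional codes is given by a permutation matrix
followed by an invertible diagonal matrix, i.e. `φ(c)_ℓ = a_ℓ · c_{σ(ℓ)}` for a permutation
`σ` of the coordinates and nonzero scalars `a_ℓ ∈ F`. -/
theorem equiv_shape {F : Type*} [Field F] [Fintype F] {n : ℕ}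
    (C1 C2 : Submodule (Polynomial F) (Fin n → Polynomial F))
    (φ : C1 ≃ₗ[Polynomial F] C2) (hφ : IsEquiv C1 C2 φ) :
    ∃ (σ : Equiv.Perm (Fin n)) (a : Fin n → F), (∀ ℓ, a ℓ ≠ 0) ∧
      ∀ c : C1, ∀ ℓ : Fin n,
        ((φ c : C2) : Fin n → Polynomial F) ℓ =
          Polynomial.C (a ℓ) * (c : Fin n → Polynomial F) (σ ℓ) := by
  classical
  obtain ⟨σ, u, h⟩ := exists_perm_units_smul_coordCoeff C1.subtype (C2.subtype ∘ₗ φ.toLinearMap)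
    hφ.card_coeff_ne_zero_eq
  refine ⟨σ, fun ℓ => u ℓ, fun ℓ => (u ℓ).ne_zero, fun c ℓ => Polynomial.ext fun i => ?_⟩
  simpa [coeff_C_mul, Units.smul_def] using LinearMap.congr_fun (h ℓ i) c
end

section
/- Let C be a convolutional code in F[x]^n of rank k with memory δ1, over a finite field F with q elements, and let 1 ≤ r ≤ k. If j̄ = min{ j ∈ ℕ : d_j^r(C) = d^r(C) }, then j̄ < (n(δ1+1)+1)·q^{δ1·k·r}. -/
open Polynomial

open ConvCode

/-!
Write `T = q^(δ1·k·r)`. If `d_a^r = d_{a+T}^r`, a family `p` attaining `d_{a+T}^r` has the same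
support up to degree `a + T` as up to `a`, so the codewords `p_s G` vanish in degrees `(a, a+T]`.
The coefficient of degree `m` of `p_s G` only depends on the coefficients of `p` in degrees
`[m - δ1, m]`, i.e. on the current input and the encoder state (the previous `δ1` inputs of all
`r` messages, `T` possibilities). Two of the states at degrees `a, …, a+T` coincide, and repeating
the inputs between them periodically keeps the codewords zero beyond `a`; truncating that
continuation at any `j` shows `d_j^r ≤ d_a^r`, so the sequence is constant from `a` on. Since
`d_j^r` is nondecreasing and at most `n(δ1+1)`, one of the steps from `iT` to `(i+1)T` with
`i ≤ n(δ1+1)` is flat.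
-/

namespace Polynomial

variable {R : Type*} [Semiring R] {δ : ℕ}

theorem coeff_mul_congr_of_natDegree_le {f f' g : R[X]} {m : ℕ} (hg : g.natDegree ≤ δ)
    (h : ∀ i ≤ m, m ≤ i + δ → f.coeff i = f'.coeff i) : (f * g).coeff m = (f' * g).coeff m := by
  simp only [coeff_mul]
  refine Finset.sum_congr rfl fun x hx => ?_
  rw [Finset.HasAntidiagonal.mem_antidiagonal] at hx
  by_cases hi : m ≤ x.1 + δ
  · rw [h x.1 (by omega) hi]
  · rw [coeff_eq_zero_of_natDegree_lt (by omega : g.natDegree < x.2), mul_zero, mul_zero]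

theorem coeff_vecMul_congr_of_natDegree_le {k n : ℕ} {G : Matrix (Fin k) (Fin n) R[X]}
    (hG : ∀ l ℓ, (G l ℓ).natDegree ≤ δ) {p p' : Fin k → R[X]} {m : ℕ}
    (h : ∀ l, ∀ i ≤ m, m ≤ i + δ → (p l).coeff i = (p' l).coeff i) (ℓ : Fin n) :
    (Matrix.vecMul p G ℓ).coeff m = (Matrix.vecMul p' G ℓ).coeff m := by
  simp only [Matrix.vecMul, dotProduct, finsetSum_coeff]
  exact Finset.sum_congr rfl fun l _ => coeff_mul_congr_of_natDegree_le (hG l ℓ) (h l)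

end Polynomial

theorem exists_lt_le_card_map_eq {β : Type*} [Fintype β] (f : ℕ → β) :
    ∃ u v, u < v ∧ v ≤ Fintype.card β ∧ f u = f v := by
  obtain ⟨x, y, hxy, hf⟩ :=
    Fintype.exists_ne_map_eq_of_card_lt (fun i : Fin (Fintype.card β + 1) => f i) (by simp)
  rcases lt_or_gt_of_ne (Fin.val_injective.ne hxy) with h | h
  · exact ⟨x, y, h, Nat.lt_succ_iff.mp y.isLt, hf⟩
  · exact ⟨y, x, h, Nat.lt_succ_iff.mp x.isLt, hf.symm⟩

theorem Monotone.exists_le_map_eq_map_succ {f : ℕ → ℕ} (hf : Monotone f) {B : ℕ}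
    (hB : ∀ i, f i ≤ B) : ∃ i ≤ B, f i = f (i + 1) := by
  by_contra! hne
  have hgrow : ∀ i ≤ B + 1, i ≤ f i := by
    intro i
    induction i with
    | zero => simp
    | succ i ih =>
      intro hi
      have := lt_of_le_of_ne (hf (Nat.le_add_right i 1)) (hne i (by omega))
      omega
  exact absurd (hB (B + 1)) (by have := hgrow (B + 1) le_rfl; omega)

namespace ConvCode

section PeriodicExtension

variable {α : Type*} (f : ℕ → α) (N d : ℕ)

def periodicExtension (i : ℕ) : α :=
  if i ≤ N ∨ d = 0 then f i else periodicExtension (i - d)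
termination_by i
decreasing_by omega

variable {f N d}

theorem periodicExtension_of_le {i : ℕ} (h : i ≤ N) : periodicExtension f N d i = f i := by
  rw [periodicExtension, if_pos (Or.inl h)]

theorem periodicExtension_of_lt {i : ℕ} (hd : 0 < d) (h : N < i) :
    periodicExtension f N d i = periodicExtension f N d (i - d) := by
  rw [periodicExtension, if_neg (by omega)]

end PeriodicExtension

section Encoder

variable {R : Type*} [Semiring R] {k n δ : ℕ}

/-- The inputs of degrees `t - δ + 1, …, t` of the message `p`, read as zero below degree `0`. -/
noncomputable def encoderState (p : Fin k → R[X]) (δ t : ℕ) : Fin δ → Fin k → R :=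
  fun e l => (X ^ (e : ℕ) * p l).coeff t

/-- Continuing `p` periodically with period `N - M` keeps `pG` zero beyond `a`. -/
theorem exists_coeff_vecMul_eq_of_encoderState_eq {G : Matrix (Fin k) (Fin n) R[X]}
    (hG : ∀ l ℓ, (G l ℓ).natDegree ≤ δ) {p : Fin k → R[X]} {a M N : ℕ} (haM : a ≤ M)
    (hMN : M < N) (hstate : encoderState p δ M = encoderState p δ N)
    (hgap : ∀ ℓ m, a < m → m ≤ N → (Matrix.vecMul p G ℓ).coeff m = 0) (j : ℕ) :
    ∃ P : Fin k → R[X], (∀ l, (P l).coeff 0 = (p l).coeff 0) ∧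
      ∀ ℓ, ∀ m ≤ j, (Matrix.vecMul P G ℓ).coeff m =
        if m ≤ a then (Matrix.vecMul p G ℓ).coeff m else 0 := by
  set d := N - M
  let P : Fin k → R[X] := fun l =>
    PowerSeries.trunc (j + 1) (PowerSeries.mk (periodicExtension (p l).coeff N d))
  have hP : ∀ l i, i ≤ j → (P l).coeff i = periodicExtension (p l).coeff N d i := by
    intro l i hi
    simp [P, PowerSeries.coeff_trunc, Nat.lt_succ_of_le hi]
  have hagree : ∀ l i, i ≤ N → i ≤ j → (P l).coeff i = (p l).coeff i := fun l i hiN hij => by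
    rw [hP l i hij, periodicExtension_of_le hiN]
  have hperiodic : ∀ l i, i ≤ j → N < i + δ →
      (P l).coeff i = (((X : R[X]) ^ d • P) l).coeff i := by
    intro l i hij hiδ
    rw [Pi.smul_apply, smul_eq_mul, coeff_X_pow_mul']
    rcases le_or_gt i N with hiN | hNi
    · have hi := congrFun (congrFun hstate ⟨N - i, by omega⟩) l
      simp only [encoderState, coeff_X_pow_mul', if_pos (Nat.sub_le N i),
        Nat.sub_sub_self hiN] at hi
      rw [hagree l i hiN hij, ← hi]
      by_cases hdi : d ≤ i
      · rw [if_pos (by omega), if_pos hdi, hagree l (i - d) (by omega) (by omega)]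
        congr 1
        omega
      · rw [if_neg (by omega), if_neg hdi]
    · rw [if_pos (by omega), hP l i hij, hP l (i - d) (by omega),
        periodicExtension_of_lt (by omega) hNi]
  refine ⟨P, fun l => hagree l 0 (Nat.zero_le N) (Nat.zero_le j), fun ℓ m hmj => ?_⟩
  induction m using Nat.strong_induction_on generalizing ℓ with
  | _ m ih =>
    rcases le_or_gt m N with hmN | hNm
    · rw [coeff_vecMul_congr_of_natDegree_le hG (p' := p)
        (fun l i him _ => hagree l i (him.trans hmN) (him.trans hmj))]
      split_ifs with hma
      · rfl
      · exact hgap ℓ m (by omega) hmN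
    · rw [coeff_vecMul_congr_of_natDegree_le hG (p' := X ^ d • P)
        (fun l i him hiδ => hperiodic l i (him.trans hmj) (by omega)),
        Matrix.smul_vecMul, Pi.smul_apply, smul_eq_mul, coeff_X_pow_mul', if_pos (by omega),
        ih (m - d) (by omega) ℓ (by omega), if_neg (by omega), if_neg (by omega)]

theorem exists_encoderState_eq [Fintype R] {r : ℕ} (p : Fin r → Fin k → R[X]) (δ a : ℕ) :
    ∃ u v, u < v ∧ v ≤ Fintype.card R ^ (δ * k * r) ∧
      ∀ s, encoderState (p s) δ (a + u) = encoderState (p s) δ (a + v) := by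
  obtain ⟨u, v, huv, hv, hstate⟩ :=
    exists_lt_le_card_map_eq fun t s => encoderState (p s) δ (a + t)
  refine ⟨u, v, huv, ?_, congrFun hstate⟩
  simp only [Fintype.card_fun, Fintype.card_fin, ← pow_mul] at hv
  rwa [show k * δ * r = δ * k * r by ring] at hv

end Encoder

section Truncation

variable {F : Type*} [Field F] {n r : ℕ}

theorem coeff_truncv (h j : ℕ) (c : Fin n → F[X]) (ℓ : Fin n) (m : ℕ) :
    (truncv h j c ℓ).coeff m = if h ≤ m ∧ m ≤ j then (c ℓ).coeff m else 0 := by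
  simp only [truncv, truncp, finsetSum_coeff, coeff_C_mul, coeff_X_pow, mul_ite, mul_one,
    mul_zero, Finset.sum_ite_eq, Finset.mem_Icc]

theorem gsupp_subset_of_coeff_eq_zero {c : Fin r → Fin n → F[X]} {B : ℕ}
    (hc : ∀ s ℓ m, B < m → (c s ℓ).coeff m = 0) :
    gsupp c ⊆ ↑(Finset.univ ×ˢ Finset.Iic B : Finset (Fin n × ℕ)) := by
  rintro ⟨ℓ, m⟩ ⟨s, hs⟩
  simpa using not_lt.mp fun h => hs (hc s ℓ m h)

theorem gsupp_truncv_finite (c : Fin r → Fin n → F[X]) (j : ℕ) :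
    (gsupp fun s => truncv 0 j (c s)).Finite :=
  (Finset.finite_toSet _).subset <| gsupp_subset_of_coeff_eq_zero (B := j) fun s ℓ m hm => by
    rw [coeff_truncv, if_neg (by omega)]

theorem gsupp_truncv_mono (c : Fin r → Fin n → F[X]) {i j : ℕ} (h : i ≤ j) :
    (gsupp fun s => truncv 0 i (c s)) ⊆ gsupp fun s => truncv 0 j (c s) := by
  rintro ⟨ℓ, m⟩ ⟨s, hs⟩
  refine ⟨s, ?_⟩
  rw [coeff_truncv] at hs ⊢
  split_ifs at hs with hm
  · rwa [if_pos ⟨hm.1, hm.2.trans h⟩]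
  · exact absurd rfl hs

theorem coeff_eq_zero_of_gsupp_truncv_eq {c : Fin r → Fin n → F[X]} {i j : ℕ}
    (h : (gsupp fun s => truncv 0 i (c s)) = gsupp fun s => truncv 0 j (c s))
    (s : Fin r) (ℓ : Fin n) {m : ℕ} (him : i < m) (hmj : m ≤ j) : (c s ℓ).coeff m = 0 := by
  by_contra hne
  have hmem : (ℓ, m) ∈ gsupp fun s => truncv 0 j (c s) :=
    ⟨s, by rwa [coeff_truncv, if_pos ⟨m.zero_le, hmj⟩]⟩
  obtain ⟨s', hs'⟩ := h ▸ hmem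
  rw [coeff_truncv, if_neg (by omega)] at hs'
  exact hs' rfl

end Truncation

section ColumnDistance

variable {F : Type*} [Field F] {n k r δ : ℕ} {G : Matrix (Fin k) (Fin n) F[X]}

theorem natDegree_le_sup_degv (G : Matrix (Fin k) (Fin n) F[X]) (l : Fin k) (ℓ : Fin n) :
    (G l ℓ).natDegree ≤ Finset.univ.sup fun i => degv (G i) :=
  (Finset.le_sup (f := fun ℓ => (G l ℓ).natDegree) (Finset.mem_univ ℓ)).trans
    (Finset.le_sup (f := fun i => degv (G i)) (Finset.mem_univ l))

theorem gcdJ_le_ncard {j : ℕ} (p : Fin r → Fin k → F[X])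
    (hp : LinearIndependent F fun s l => (p s l).eval 0) :
    gcdJ G r j ≤ (gsupp fun s => truncv 0 j (Matrix.vecMul (p s) G)).ncard :=
  Nat.sInf_le ⟨p, hp, rfl⟩

theorem linearIndependent_eval_zero_single_one (hrk : r ≤ k) :
    LinearIndependent F fun (s : Fin r) l =>
      (Pi.single (M := fun _ : Fin k => F[X]) (Fin.castLE hrk s) 1 l).eval 0 := by
  simp_rw [Pi.apply_single (fun _ (q : F[X]) => q.eval 0) (fun _ => eval_zero), eval_one]
  exact (Pi.linearIndependent_single_one (Fin k) F).comp _ (Fin.castLE_injective hrk)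

theorem exists_ncard_eq_gcdJ (G : Matrix (Fin k) (Fin n) F[X]) (hrk : r ≤ k) (j : ℕ) :
    ∃ p : Fin r → Fin k → F[X], (LinearIndependent F fun s l => (p s l).eval 0) ∧
      (gsupp fun s => truncv 0 j (Matrix.vecMul (p s) G)).ncard = gcdJ G r j := by
  obtain ⟨p, hp, hcard⟩ := Nat.sInf_mem (s := {m | ∃ p : Fin r → Fin k → F[X],
    (LinearIndependent F fun s l => (p s l).eval 0) ∧
      m = (gsupp fun s => truncv 0 j (Matrix.vecMul (p s) G)).ncard})
    ⟨_, _, linearIndependent_eval_zero_single_one hrk, rfl⟩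
  exact ⟨p, hp, hcard.symm⟩

theorem gcdJ_mono (hrk : r ≤ k) : Monotone (gcdJ G r) := fun i j hij => by
  obtain ⟨p, hp, hcard⟩ := exists_ncard_eq_gcdJ G hrk j
  calc gcdJ G r i ≤ (gsupp fun s => truncv 0 i (Matrix.vecMul (p s) G)).ncard := gcdJ_le_ncard p hp
    _ ≤ (gsupp fun s => truncv 0 j (Matrix.vecMul (p s) G)).ncard :=
      Set.ncard_le_ncard (gsupp_truncv_mono _ hij) (gsupp_truncv_finite _ j)
    _ = gcdJ G r j := hcard

theorem gcdJ_le (hG : ∀ l ℓ, (G l ℓ).natDegree ≤ δ) (hrk : r ≤ k) (j : ℕ) :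
    gcdJ G r j ≤ n * (δ + 1) := by
  have hsupp : (gsupp fun s => truncv 0 j (Matrix.vecMul (Pi.single (Fin.castLE hrk s) 1) G)) ⊆
      ↑(Finset.univ ×ˢ Finset.Iic δ : Finset (Fin n × ℕ)) := by
    refine gsupp_subset_of_coeff_eq_zero fun s ℓ m hm => ?_
    rw [coeff_truncv, Matrix.single_one_vecMul]
    split_ifs
    · exact coeff_eq_zero_of_natDegree_lt ((hG _ ℓ).trans_lt hm)
    · rfl
  calc gcdJ G r j ≤ _ := gcdJ_le_ncard _ (linearIndependent_eval_zero_single_one hrk)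
    _ ≤ _ := Set.ncard_le_ncard hsupp (Finset.finite_toSet _)
    _ = n * (δ + 1) := by simp

theorem gcdJ_le_of_gcdJ_eq [Fintype F] (hG : ∀ l ℓ, (G l ℓ).natDegree ≤ δ) (hrk : r ≤ k)
    {a : ℕ} (heq : gcdJ G r a = gcdJ G r (a + Fintype.card F ^ (δ * k * r))) (j : ℕ) :
    gcdJ G r j ≤ gcdJ G r a := by
  set T := Fintype.card F ^ (δ * k * r)
  rcases lt_or_ge j a with hja | haj
  · exact gcdJ_mono hrk hja.le
  obtain ⟨p, hp, hcard⟩ := exists_ncard_eq_gcdJ G hrk (a + T)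
  have hsupp : (gsupp fun s => truncv 0 a (Matrix.vecMul (p s) G)) =
      gsupp fun s => truncv 0 (a + T) (Matrix.vecMul (p s) G) :=
    Set.eq_of_subset_of_ncard_le (gsupp_truncv_mono _ (Nat.le_add_right a T))
      (hcard ▸ heq ▸ gcdJ_le_ncard p hp) (gsupp_truncv_finite _ _)
  obtain ⟨u, v, huv, hvT, hstate⟩ := exists_encoderState_eq p δ a
  choose P hP0 hPcoeff using fun s => exists_coeff_vecMul_eq_of_encoderState_eq hG
    (Nat.le_add_right a u) (by omega : a + u < a + v) (hstate s)
    (fun ℓ m ham hmv => coeff_eq_zero_of_gsupp_truncv_eq hsupp s ℓ ham (by omega)) j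
  have htrunc : ∀ s, truncv 0 j (Matrix.vecMul (P s) G) = truncv 0 a (Matrix.vecMul (p s) G) := by
    intro s
    funext ℓ
    ext m
    simp only [coeff_truncv, zero_le, true_and]
    by_cases hmj : m ≤ j
    · rw [hPcoeff s ℓ m hmj, if_pos hmj]
    · rw [if_neg hmj, if_neg (by omega)]
  have hP : LinearIndependent F fun s l => (P s l).eval 0 := by
    simpa only [← coeff_zero_eq_eval_zero, hP0] using hp
  calc gcdJ G r j ≤ (gsupp fun s => truncv 0 j (Matrix.vecMul (P s) G)).ncard := gcdJ_le_ncard P hP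
    _ = gcdJ G r a := by rw [funext htrunc, hsupp, hcard, heq]

theorem gcdLim_eq_of_forall_gcdJ_le (hrk : r ≤ k) {a : ℕ} (h : ∀ j, gcdJ G r j ≤ gcdJ G r a) :
    gcdLim G r = gcdJ G r a := by
  rw [gcdLim, Filter.limsup_congr (Filter.eventually_atTop.mpr
    ⟨a, fun j hj => le_antisymm (h j) (gcdJ_mono hrk hj)⟩), Filter.limsup_const]

end ColumnDistance

end ConvCode

theorem gcdJ_stabilizes_general {F : Type*} [Field F] [Fintype F] {n k : ℕ}
    (G : Matrix (Fin k) (Fin n) (Polynomial F))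
    (δ1 : ℕ) (hδ1 : δ1 = Finset.univ.sup fun i => degv (G i))
    (r : ℕ) (hrk : r ≤ k)
    (jbar : ℕ) (hjbar : jbar = sInf { j : ℕ | gcdJ G r j = gcdLim G r }) :
    jbar < (n * (δ1 + 1) + 1) * (Fintype.card F) ^ (δ1 * k * r) := by
  set T := Fintype.card F ^ (δ1 * k * r)
  have hG : ∀ l ℓ, (G l ℓ).natDegree ≤ δ1 := hδ1 ▸ natDegree_le_sup_degv G
  obtain ⟨i, hi, hflat⟩ := ((gcdJ_mono hrk).comp fun _ _ h => Nat.mul_le_mul_right T h)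
    |>.exists_le_map_eq_map_succ fun i => gcdJ_le hG hrk (i * T)
  have hmax := gcdJ_le_of_gcdJ_eq hG hrk (a := i * T) (by simpa [add_mul] using hflat)
  have hjbar_le : jbar ≤ i * T := hjbar ▸ Nat.sInf_le (gcdLim_eq_of_forall_gcdJ_le hrk hmax).symm
  have hT : 0 < T := pow_pos Fintype.card_pos _
  calc jbar ≤ n * (δ1 + 1) * T := hjbar_le.trans (Nat.mul_le_mul_right T hi)
    _ < (n * (δ1 + 1) + 1) * T := by rw [add_one_mul]; omega

/-- if `j̄` is the first index at which the `(r,j)`-generalized column distance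
reaches its limit value `d^r(C)`, then `j̄ < (n(δ1+1)+1)·q^(δ1·k·r)`. -/
theorem gcdJ_stabilizes {F : Type*} [Field F] [Fintype F] {n k : ℕ}
    (C : Submodule (Polynomial F) (Fin n → Polynomial F))
    (hk : 1 ≤ k) (hkn : k ≤ n)
    (G : Matrix (Fin k) (Fin n) (Polynomial F)) (hG : IsGenMat C G) (hRR : RowReduced G)
    (δ1 : ℕ) (hδ1 : δ1 = Finset.univ.sup fun i => degv (G i))
    (r : ℕ) (hr : 1 ≤ r) (hrk : r ≤ k)
    (jbar : ℕ) (hjbar : jbar = sInf { j : ℕ | gcdJ G r j = gcdLim G r }) :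
    jbar < (n * (δ1 + 1) + 1) * (Fintype.card F) ^ (δ1 * k * r) :=
  gcdJ_stabilizes_general G δ1 hδ1 r hrk jbar hjbar
end
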